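/- Let G be a connected simple graph. Then Δ(C(G)) + 1 ≤ χ''(C(G)) ≤ χ''_D(C(G)) ≤ Δ(C(G)) + 2; in particular, the total distinguishing chromatic number χ''_D(C(G)) of the central graph equals either Δ(C(G)) + 1 or Δ(C(G)) + 2. -/

import Mathlib

open SimpleGraph

/-- The subdivision graph `S(G)`: each edge `{u,v}` of `G` is replaced by a new
vertex (the element of `G.edgeSet`) adjacent to both `u` and `v`. -/
def subdivisionGraph {V : Type*} (G : SimpleGraph V) : SimpleGraph (V ⊕ G.edgeSet) where
  Adj x y :=
    match x, y with
    | Sum.inl u, Sum.inr e => u ∈ (e : Sym2 V)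
    | Sum.inr e, Sum.inl u => u ∈ (e : Sym2 V)
    | _, _ => False
  symm := Std.Symm.mk <| by rintro (u | e) (v | f) h <;> simp_all
  loopless := Std.Irrefl.mk <| by rintro (u | e) h <;> simp_all

/-- The central graph `C(G)`: obtained from the subdivision graph `S(G)` by joining
every pair of distinct vertices of `G` that are non-adjacent in `G`. -/
def centralGraph {V : Type*} (G : SimpleGraph V) : SimpleGraph (V ⊕ G.edgeSet) where
  Adj x y :=
    match x, y with
    | Sum.inl u, Sum.inl v => u ≠ v ∧ ¬ G.Adj u v
    | Sum.inl u, Sum.inr e => u ∈ (e : Sym2 V)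
    | Sum.inr e, Sum.inl u => u ∈ (e : Sym2 V)
    | Sum.inr _, Sum.inr _ => False
  symm := Std.Symm.mk <| by
    rintro (u | e) (v | f) h
    · exact ⟨h.1.symm, fun a => h.2 a.symm⟩
    · exact h
    · exact h
    · exact h
  loopless := Std.Irrefl.mk <| by
    rintro (u | e) h
    · exact h.1 rfl
    · exact h

/-- The middle graph `M(G)`: obtained from the subdivision graph `S(G)` by joining
each pair of distinct subdivided vertices corresponding to adjacent edges of `G`. -/
def middleGraph {V : Type*} (G : SimpleGraph V) : SimpleGraph (V ⊕ G.edgeSet) where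
  Adj x y :=
    match x, y with
    | Sum.inl u, Sum.inr e => u ∈ (e : Sym2 V)
    | Sum.inr e, Sum.inl u => u ∈ (e : Sym2 V)
    | Sum.inr e, Sum.inr f => e ≠ f ∧ ∃ u, u ∈ (e : Sym2 V) ∧ u ∈ (f : Sym2 V)
    | Sum.inl _, Sum.inl _ => False
  symm := Std.Symm.mk <| by
    rintro (u | e) (v | f) h
    · exact h
    · exact h
    · exact h
    · exact ⟨h.1.symm, h.2.imp fun u hu => ⟨hu.2, hu.1⟩⟩
  loopless := Std.Irrefl.mk <| by
    rintro (u | e) h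
    · exact h
    · exact h.1 rfl

/-- The line graph `L(G)`: vertices are the edges of `G`, two distinct edges being
adjacent when they share an endpoint. -/
def lineG {V : Type*} (G : SimpleGraph V) : SimpleGraph G.edgeSet where
  Adj e f := e ≠ f ∧ ∃ u, u ∈ (e : Sym2 V) ∧ u ∈ (f : Sym2 V)
  symm := ⟨fun e f h => ⟨h.1.symm, h.2.imp fun u hu => ⟨hu.2, hu.1⟩⟩⟩
  loopless := ⟨fun e h => h.1 rfl⟩

/-- The endline graph `G⁺`: to each vertex `v` of `G` we attach a new pendant
vertex; `Sum.inl` is the copy of `V(G)` and `Sum.inr` are the new vertices. -/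
def endlineGraph {V : Type*} (G : SimpleGraph V) : SimpleGraph (V ⊕ V) where
  Adj x y :=
    match x, y with
    | Sum.inl u, Sum.inl v => G.Adj u v
    | Sum.inl u, Sum.inr v => u = v
    | Sum.inr u, Sum.inl v => u = v
    | Sum.inr _, Sum.inr _ => False
  symm := Std.Symm.mk <| by
    rintro (u | u) (v | v) h
    · exact h.symm
    · exact h.symm
    · exact h.symm
    · exact h
  loopless := Std.Irrefl.mk <| by
    rintro (u | u) h
    · exact G.loopless.irrefl u h
    · exact h

/-- The join `G₁ + G₂` of two vertex-disjoint graphs: their disjoint union together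
with all edges between the two vertex sets. -/
def joinGraph {V₁ V₂ : Type*} (G₁ : SimpleGraph V₁) (G₂ : SimpleGraph V₂) :
    SimpleGraph (V₁ ⊕ V₂) where
  Adj x y :=
    match x, y with
    | Sum.inl u, Sum.inl v => G₁.Adj u v
    | Sum.inr u, Sum.inr v => G₂.Adj u v
    | Sum.inl _, Sum.inr _ => True
    | Sum.inr _, Sum.inl _ => True
  symm := Std.Symm.mk <| by
    rintro (u | u) (v | v) h
    · exact h.symm
    · trivial
    · trivial
    · exact h.symm
  loopless := Std.Irrefl.mk <| by
    rintro (u | u) h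
    · exact G₁.loopless.irrefl u h
    · exact G₂.loopless.irrefl u h

/-- The maximum degree `Δ(H)` of a graph (as a supremum of cardinalities of
neighborhoods, which agrees with the usual maximum degree for finite graphs). -/
noncomputable def maxDeg {W : Type*} (H : SimpleGraph W) : ℕ :=
  sSup {k | ∃ v : W, k = (H.neighborSet v).ncard}

/-- A graph is regular if all vertices have the same degree. -/
def IsRegularGraph {W : Type*} (H : SimpleGraph W) : Prop :=
  ∀ u v : W, (H.neighborSet u).ncard = (H.neighborSet v).ncard

/-- The distinguishing number `D(H)`: the least `d` such that `H` admits a vertex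
coloring with `d` colors preserved only by the identity automorphism. -/
noncomputable def distinguishingNumber {W : Type*} (H : SimpleGraph W) : ℕ :=
  sInf {d | ∃ c : W → Fin d, ∀ φ : H ≃g H, (∀ v, c (φ v) = c v) → ∀ v, φ v = v}

/-- The distinguishing index `D'(H)`: the least `d` such that `H` admits an edge
coloring with `d` colors preserved only by the identity automorphism. -/
noncomputable def distinguishingIndex {W : Type*} (H : SimpleGraph W) : ℕ :=
  sInf {d | ∃ c : H.edgeSet → Fin d,
    ∀ φ : H ≃g H, (∀ e, c (φ.mapEdgeSet e) = c e) → ∀ v, φ v = v}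

/-- A proper total coloring of `H` with `d` colors: adjacent vertices, adjacent
edges, and incident vertex/edge pairs receive distinct colors. -/
def IsProperTotalColoring {W : Type*} (H : SimpleGraph W) {d : ℕ}
    (f : W ⊕ H.edgeSet → Fin d) : Prop :=
  (∀ u v : W, H.Adj u v → f (Sum.inl u) ≠ f (Sum.inl v)) ∧
  (∀ e e' : H.edgeSet, e ≠ e' → (∃ u, u ∈ (e : Sym2 W) ∧ u ∈ (e' : Sym2 W)) →
    f (Sum.inr e) ≠ f (Sum.inr e')) ∧
  (∀ (v : W) (e : H.edgeSet), v ∈ (e : Sym2 W) → f (Sum.inl v) ≠ f (Sum.inr e))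

/-- An automorphism `φ` preserves a total coloring `f`. -/
def PreservesTotalColoring {W : Type*} (H : SimpleGraph W) {d : ℕ}
    (f : W ⊕ H.edgeSet → Fin d) (φ : H ≃g H) : Prop :=
  (∀ v : W, f (Sum.inl (φ v)) = f (Sum.inl v)) ∧
  (∀ e : H.edgeSet, f (Sum.inr (φ.mapEdgeSet e)) = f (Sum.inr e))

/-- The total chromatic number `χ''(H)`. -/
noncomputable def totalChromaticNumber {W : Type*} (H : SimpleGraph W) : ℕ :=
  sInf {d | ∃ f : W ⊕ H.edgeSet → Fin d, IsProperTotalColoring H f}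

/-- The total distinguishing chromatic number `χ''_D(H)`: the least `d` such that
`H` has a proper total coloring with `d` colors preserved only by the identity. -/
noncomputable def totalDistinguishingChromaticNumber {W : Type*} (H : SimpleGraph W) : ℕ :=
  sInf {d | ∃ f : W ⊕ H.edgeSet → Fin d, IsProperTotalColoring H f ∧
    ∀ φ : H ≃g H, PreservesTotalColoring H f φ → ∀ v, φ v = v}

/-- The color class `C_H(u)` of a vertex under a total coloring: the color of `u`
together with the colors of the edges incident to `u`. -/
def totalColorClass {W : Type*} (H : SimpleGraph W) {d : ℕ}
    (f : W ⊕ H.edgeSet → Fin d) (u : W) : Set (Fin d) :=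
  {f (Sum.inl u)} ∪ {x | ∃ e : H.edgeSet, u ∈ (e : Sym2 W) ∧ x = f (Sum.inr e)}

/-- An AVD-total coloring: a proper total coloring in which adjacent vertices have
distinct color classes. -/
def IsAVDTotalColoring {W : Type*} (H : SimpleGraph W) {d : ℕ}
    (f : W ⊕ H.edgeSet → Fin d) : Prop :=
  IsProperTotalColoring H f ∧
  ∀ u v : W, H.Adj u v → totalColorClass H f u ≠ totalColorClass H f v

/-- The AVD-total chromatic number `χ''ₐ(H)`. -/
noncomputable def avdTotalChromaticNumber {W : Type*} (H : SimpleGraph W) : ℕ :=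
  sInf {d | ∃ f : W ⊕ H.edgeSet → Fin d, IsAVDTotalColoring H f}

/-- A total dominator coloring: a proper vertex coloring such that every vertex is
adjacent to every vertex of some (nonempty) color class. -/
def IsTotalDominatorColoring {W : Type*} (H : SimpleGraph W) {d : ℕ}
    (c : W → Fin d) : Prop :=
  (∀ u v : W, H.Adj u v → c u ≠ c v) ∧
  (∀ v : W, ∃ i : Fin d, (∃ w, c w = i) ∧ ∀ w, c w = i → H.Adj v w)

/-- The total dominator chromatic number `χᵗ_d(H)`. -/
noncomputable def tdChromaticNumber {W : Type*} (H : SimpleGraph W) : ℕ :=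
  sInf {d | ∃ c : W → Fin d, IsTotalDominatorColoring H c}

/-!
Every vertex of `G` has degree `|V| - 1` in `C(G)`, so `Δ(C(G)) + 1 ≤ χ''(C(G))` and it suffices
to find a proper total colouring of `C(G)` with `|V| + 1` colours that only the identity preserves.
Number the vertices by `ι : V ≃ Fin |V|` and give `u` the colour `ι u`; a colour-preserving
automorphism that maps `V` to itself then fixes `V` pointwise, hence also every subdivision vertex,
which is determined by its two neighbours. The edges of `C(G)` at `u` correspond to the vertices
`p ≠ u`, and the one towards `p` gets the colour `ι u + ι p + 1` modulo `|V| + 1`, as in the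
standard total colouring of `K_|V|`. On an edge `{u, v}` of `G` with `ι v < ι u` the two halves of
the subdivided edge would then have the same colour, so `u` replaces `v` by the next vertex after
`v` among `u` and its earlier neighbours, which keeps the colours at `u` distinct. Each subdivision
vertex sees at most four colours and takes a fifth one. If `|V| ≥ 4`, automorphisms preserve
`V` because its vertices have degree `|V| - 1 ≠ 2`; for connected `G` with `|V| ≤ 3` each vertex
has at most one non-neighbour, and a colouring giving all subdivision vertices the extra colour
works.
-/

open Function Sum

section TotalColoring

variable {W : Type*} (H : SimpleGraph W)

lemma bddAbove_ncard_neighborSet [Finite W] :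
    BddAbove {k | ∃ v : W, k = (H.neighborSet v).ncard} := by
  refine ⟨Nat.card W, ?_⟩
  rintro k ⟨v, rfl⟩
  exact Set.ncard_le_card _

lemma ncard_neighborSet_le_maxDeg [Finite W] (x : W) :
    (H.neighborSet x).ncard ≤ maxDeg H :=
  le_csSup (bddAbove_ncard_neighborSet H) ⟨x, rfl⟩

lemma exists_ncard_neighborSet_eq_maxDeg [Finite W] [Nonempty W] :
    ∃ x, maxDeg H = (H.neighborSet x).ncard :=
  Nat.sSup_mem (s := {k | ∃ v : W, k = (H.neighborSet v).ncard})
    ⟨_, Classical.arbitrary W, rfl⟩ (bddAbove_ncard_neighborSet H)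

variable {H}

lemma SimpleGraph.Iso.ncard_neighborSet {W' : Type*} {H' : SimpleGraph W'} (φ : H ≃g H')
    (x : W) : (H'.neighborSet (φ x)).ncard = (H.neighborSet x).ncard := by
  rw [← φ.image_neighborSet, Set.ncard_image_of_injective _ φ.injective]

/-- The colours of `x` and of the edges at `x` are pairwise distinct. -/
lemma IsProperTotalColoring.ncard_neighborSet_add_one_le [Finite W] {d : ℕ}
    {f : W ⊕ H.edgeSet → Fin d} (hf : IsProperTotalColoring H f) (x : W) :
    (H.neighborSet x).ncard + 1 ≤ d := by
  classical
  let c : W → Fin d := fun y => if h : H.Adj x y then f (inr ⟨s(x, y), h⟩) else f (inl x)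
  have hc : Set.InjOn c (insert x (H.neighborSet x)) := by
    have hx : ∀ y (hy : H.Adj x y), c x ≠ c y := fun y hy => by
      simpa [c, hy] using hf.2.2 x ⟨s(x, y), hy⟩ (Sym2.mem_mk_left _ _)
    rintro y (rfl | hy) y' (rfl | hy') hcy
    · rfl
    · exact absurd hcy (hx y' hy')
    · exact absurd hcy.symm (hx y hy)
    · by_contra hne
      have hE : (⟨s(x, y), hy⟩ : H.edgeSet) ≠ ⟨s(x, y'), hy'⟩ :=
        fun h => hne (Sym2.congr_right.mp (congrArg Subtype.val h))
      refine hf.2.1 _ _ hE ⟨x, Sym2.mem_mk_left _ _, Sym2.mem_mk_left _ _⟩ ?_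
      simpa [c, show H.Adj x y from hy, show H.Adj x y' from hy'] using hcy
  have := Set.ncard_le_ncard_of_injOn c (fun _ _ => Set.mem_univ _) hc
  rwa [Set.ncard_insert_of_notMem (s := H.neighborSet x) (H.loopless.irrefl x), Set.ncard_univ,
    Nat.card_eq_fintype_card, Fintype.card_fin] at this

lemma maxDeg_add_one_le_totalChromaticNumber [Finite W] [Nonempty W]
    (h : ∃ d, ∃ f : W ⊕ H.edgeSet → Fin d, IsProperTotalColoring H f) :
    maxDeg H + 1 ≤ totalChromaticNumber H :=
  le_csInf h fun _ ⟨_, hf⟩ => by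
    obtain ⟨x, hx⟩ := exists_ncard_neighborSet_eq_maxDeg H
    exact hx ▸ hf.ncard_neighborSet_add_one_le x

lemma totalChromaticNumber_le_totalDistinguishingChromaticNumber
    (h : ∃ d, ∃ f : W ⊕ H.edgeSet → Fin d, IsProperTotalColoring H f ∧
      ∀ φ : H ≃g H, PreservesTotalColoring H f φ → ∀ v, φ v = v) :
    totalChromaticNumber H ≤ totalDistinguishingChromaticNumber H :=
  csInf_le_csInf (OrderBot.bddBelow _) h fun _ ⟨f, hf, _⟩ => ⟨f, hf⟩

end TotalColoring

section CentralGraph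

variable {V : Type*} (G : SimpleGraph V)

@[simp] lemma centralGraph_adj_inl_inr {u : V} {e : G.edgeSet} :
    (centralGraph G).Adj (inl u) (inr e) ↔ u ∈ (e : Sym2 V) := Iff.rfl

@[simp] lemma centralGraph_adj_inr_inl {u : V} {e : G.edgeSet} :
    (centralGraph G).Adj (inr e) (inl u) ↔ u ∈ (e : Sym2 V) := Iff.rfl

@[simp] lemma centralGraph_not_adj_inr_inr (e e' : G.edgeSet) :
    ¬ (centralGraph G).Adj (inr e) (inr e') := id

/-- The neighbours of `u` in `C(G)` correspond to the vertices `p ≠ u` via `towards G u`. -/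
noncomputable def towards (u p : V) : V ⊕ G.edgeSet :=
  open Classical in if h : G.Adj u p then inr ⟨s(u, p), h⟩ else inl p

variable {G}

lemma towards_of_adj {u p : V} (h : G.Adj u p) : towards G u p = inr ⟨s(u, p), h⟩ :=
  dif_pos h

lemma towards_of_not_adj {u p : V} (h : ¬ G.Adj u p) : towards G u p = inl p :=
  dif_neg h

lemma towards_eq_inl_iff {u p v : V} : towards G u p = inl v ↔ ¬ G.Adj u p ∧ p = v := by
  by_cases h : G.Adj u p <;> simp [towards, h]

lemma towards_eq_inr_iff {u p : V} {e : G.edgeSet} :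
    towards G u p = inr e ↔ G.Adj u p ∧ (e : Sym2 V) = s(u, p) := by
  by_cases h : G.Adj u p <;> simp [towards, h, Subtype.ext_iff, eq_comm]

lemma towards_injective (u : V) : Injective (towards G u) := by
  intro p q hpq
  by_cases hp : G.Adj u p <;> by_cases hq : G.Adj u q
  · rw [towards_of_adj hp, towards_of_adj hq] at hpq
    exact Sym2.congr_right.1 (congrArg Subtype.val (inr_injective hpq))
  · rw [towards_of_adj hp, towards_of_not_adj hq] at hpq
    exact absurd hpq inr_ne_inl
  · rw [towards_of_not_adj hp, towards_of_adj hq] at hpq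
    exact absurd hpq inl_ne_inr
  · rw [towards_of_not_adj hp, towards_of_not_adj hq] at hpq
    exact inl_injective hpq

lemma centralGraph_adj_towards {u p : V} (h : u ≠ p) :
    (centralGraph G).Adj (inl u) (towards G u p) := by
  by_cases hp : G.Adj u p
  · simp [towards_of_adj hp]
  · simpa [towards_of_not_adj hp] using ⟨h, hp⟩

lemma exists_towards_eq_of_adj {u : V} {y : V ⊕ G.edgeSet}
    (h : (centralGraph G).Adj (inl u) y) :
    ∃ p, p ≠ u ∧ towards G u p = y := by
  rcases y with v | e
  · exact ⟨v, h.1.symm, towards_of_not_adj h.2⟩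
  · obtain ⟨p, hp⟩ : ∃ p, (e : Sym2 V) = s(u, p) := ⟨_, (Sym2.other_spec h).symm⟩
    have hadj : G.Adj u p := by simpa [hp] using e.2
    exact ⟨p, hadj.ne', towards_eq_inr_iff.2 ⟨hadj, hp⟩⟩

lemma centralGraph_neighborSet_inl (u : V) :
    (centralGraph G).neighborSet (inl u) = towards G u '' {u}ᶜ := by
  ext y
  refine ⟨fun h => exists_towards_eq_of_adj h, ?_⟩
  rintro ⟨p, hp, rfl⟩
  exact centralGraph_adj_towards (Ne.symm hp)

lemma centralGraph_ncard_neighborSet_inl [Finite V] (u : V) :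
    ((centralGraph G).neighborSet (inl u)).ncard = Nat.card V - 1 := by
  rw [centralGraph_neighborSet_inl, Set.ncard_image_of_injective _ (towards_injective u),
    Set.ncard_compl, Set.ncard_singleton]

lemma centralGraph_ncard_neighborSet_inr (e : G.edgeSet) :
    ((centralGraph G).neighborSet (inr e)).ncard = 2 := by
  obtain ⟨⟨a, b⟩, hab⟩ := e
  have h : (centralGraph G).neighborSet (inr ⟨s(a, b), hab⟩) = {inl a, inl b} := by
    ext (v | e') <;> simp [eq_comm]
  rw [h, Set.ncard_pair (by simpa using G.ne_of_adj hab)]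

lemma centralGraph_exists_inl_mem (E : (centralGraph G).edgeSet) :
    ∃ u, inl u ∈ (E : Sym2 (V ⊕ G.edgeSet)) := by
  obtain ⟨⟨x | e, y⟩, hE⟩ := E
  · exact ⟨x, Sym2.mem_mk_left _ _⟩
  · rcases y with v | e'
    · exact ⟨v, Sym2.mem_mk_right _ _⟩
    · exact absurd hE (centralGraph_not_adj_inr_inr G e e')

lemma centralGraph_edge_eq_towards (E : (centralGraph G).edgeSet) {u : V}
    (hu : inl u ∈ (E : Sym2 (V ⊕ G.edgeSet))) :
    ∃ p, p ≠ u ∧ (E : Sym2 (V ⊕ G.edgeSet)) = s(inl u, towards G u p) := by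
  have hadj : (centralGraph G).Adj (inl u) (Sym2.Mem.other hu) := by
    rw [← SimpleGraph.mem_edgeSet, Sym2.other_spec hu]
    exact E.2
  obtain ⟨p, hp, hpy⟩ := exists_towards_eq_of_adj hadj
  exact ⟨p, hp, by rw [hpy, Sym2.other_spec hu]⟩

lemma centralGraph_edge_eq_towards_of_inr_mem (E : (centralGraph G).edgeSet) {e : G.edgeSet}
    (he : inr e ∈ (E : Sym2 (V ⊕ G.edgeSet))) :
    ∃ u p, G.Adj u p ∧ (e : Sym2 V) = s(u, p) ∧
      (E : Sym2 (V ⊕ G.edgeSet)) = s(inl u, towards G u p) := by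
  obtain ⟨u, hu⟩ := centralGraph_exists_inl_mem E
  obtain ⟨p, -, hE⟩ := centralGraph_edge_eq_towards E hu
  rw [hE, Sym2.mem_iff] at he
  obtain ⟨hadj, hp⟩ := towards_eq_inr_iff.1 (he.resolve_left inr_ne_inl).symm
  exact ⟨u, p, hadj, hp, hE⟩

lemma centralGraph_iso_apply_eq_self (φ : centralGraph G ≃g centralGraph G)
    (h : ∀ v, φ (inl v) = inl v) (x : V ⊕ G.edgeSet) : φ x = x := by
  obtain v | ⟨⟨a, b⟩, hab⟩ := x
  · exact h v
  have hmem : ∀ c ∈ s(a, b), (centralGraph G).Adj (inl c) (φ (inr ⟨s(a, b), hab⟩)) := by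
    intro c hc
    rw [← h c, φ.map_adj_iff]
    exact hc
  rcases hφ : φ (inr ⟨s(a, b), hab⟩) with v | ⟨e', he'⟩
  · exact absurd (φ.injective (hφ.trans (h v).symm)) inr_ne_inl
  · rw [hφ] at hmem
    have := (Sym2.mem_and_mem_iff (G.ne_of_adj hab)).1
      ⟨hmem a (Sym2.mem_mk_left _ _), hmem b (Sym2.mem_mk_right _ _)⟩
    subst this
    rfl

lemma centralGraph_iso_apply_inl_ne_inr [Finite V] (hV : 4 ≤ Nat.card V)
    (φ : centralGraph G ≃g centralGraph G) (v : V) (e : G.edgeSet) : φ (inl v) ≠ inr e := by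
  intro h
  have := φ.ncard_neighborSet (inl v)
  rw [h, centralGraph_ncard_neighborSet_inr, centralGraph_ncard_neighborSet_inl] at this
  omega

end CentralGraph

/-- `towardsColor u p` is the colour of the edge of `C(G)` from `u` to `towards G u p`. The two
halves of a subdivided edge `{u, v}` get `towardsColor u v` and `towardsColor v u`, while an edge
`{u, v}` of `C(G)` between non-adjacent vertices is reached from both ends, whence the symmetry. -/
structure CentralColoring {V : Type*} (G : SimpleGraph V) (d : ℕ) where
  vertexColor : V → Fin d
  subdivColor : G.edgeSet → Fin d
  towardsColor : V → V → Fin d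
  vertexColor_injective : Injective vertexColor
  towardsColor_injOn (u : V) : Set.InjOn (towardsColor u) {u}ᶜ
  towardsColor_ne_vertexColor {u p : V} : p ≠ u → towardsColor u p ≠ vertexColor u
  towardsColor_ne_of_adj {u v : V} : G.Adj u v → towardsColor u v ≠ towardsColor v u
  towardsColor_comm_of_not_adj {u v : V} : ¬ G.Adj u v → towardsColor u v = towardsColor v u
  subdivColor_ne {e : G.edgeSet} {u q : V} : (e : Sym2 V) = s(u, q) →
    subdivColor e ≠ vertexColor u ∧ subdivColor e ≠ towardsColor u q

namespace CentralColoring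

variable {V : Type*} {G : SimpleGraph V} {d : ℕ} (c : CentralColoring G d)

noncomputable def edgeColor (E : (centralGraph G).edgeSet) : Fin d :=
  have h := centralGraph_edge_eq_towards E (centralGraph_exists_inl_mem E).choose_spec
  c.towardsColor (centralGraph_exists_inl_mem E).choose h.choose

lemma edgeColor_eq {E : (centralGraph G).edgeSet} {u p : V} (hp : p ≠ u)
    (hE : (E : Sym2 (V ⊕ G.edgeSet)) = s(inl u, towards G u p)) :
    c.edgeColor E = c.towardsColor u p := by
  have h := centralGraph_edge_eq_towards E (centralGraph_exists_inl_mem E).choose_spec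
  obtain ⟨-, hE'⟩ := h.choose_spec
  rw [edgeColor]
  generalize (centralGraph_exists_inl_mem E).choose = u', h.choose = p' at hE' ⊢
  rcases Sym2.eq_iff.1 (hE'.symm.trans hE) with ⟨hu, hp'⟩ | ⟨hu, hp'⟩
  · obtain rfl := inl_injective hu
    rw [towards_injective u' hp']
  · obtain ⟨hadj, rfl⟩ := towards_eq_inl_iff.1 hu.symm
    obtain ⟨-, rfl⟩ := towards_eq_inl_iff.1 hp'
    exact c.towardsColor_comm_of_not_adj fun h => hadj h.symm

noncomputable def toTotalColoring : (V ⊕ G.edgeSet) ⊕ (centralGraph G).edgeSet → Fin d :=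
  Sum.elim (Sum.elim c.vertexColor c.subdivColor) c.edgeColor

lemma isProperTotalColoring : IsProperTotalColoring (centralGraph G) c.toTotalColoring := by
  refine ⟨?_, ?_, ?_⟩
  · rintro (u | e) (v | e') h
    · exact fun hc => h.1 (c.vertexColor_injective hc)
    · exact (c.subdivColor_ne (Sym2.other_spec h).symm).1.symm
    · exact (c.subdivColor_ne (Sym2.other_spec h).symm).1
    · exact h.elim
  · rintro E E' hne ⟨w | e, hE, hE'⟩
    · obtain ⟨p, hp, hE⟩ := centralGraph_edge_eq_towards E hE
      obtain ⟨p', hp', hE'⟩ := centralGraph_edge_eq_towards E' hE'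
      simp only [toTotalColoring, Sum.elim_inr, c.edgeColor_eq hp hE, c.edgeColor_eq hp' hE']
      intro hc
      obtain rfl := c.towardsColor_injOn w hp hp' hc
      exact hne (Subtype.ext (hE.trans hE'.symm))
    · obtain ⟨u, p, hup, he, hE⟩ := centralGraph_edge_eq_towards_of_inr_mem E hE
      obtain ⟨u', p', hup', he', hE'⟩ := centralGraph_edge_eq_towards_of_inr_mem E' hE'
      simp only [toTotalColoring, Sum.elim_inr, c.edgeColor_eq hup.ne' hE,
        c.edgeColor_eq hup'.ne' hE']
      rcases Sym2.eq_iff.1 (he.symm.trans he') with ⟨rfl, rfl⟩ | ⟨rfl, rfl⟩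
      · exact absurd (Subtype.ext (hE.trans hE'.symm)) hne
      · exact c.towardsColor_ne_of_adj hup
  · rintro (w | e) E hE
    · obtain ⟨p, hp, hE⟩ := centralGraph_edge_eq_towards E hE
      simp only [toTotalColoring, Sum.elim_inl, Sum.elim_inr, c.edgeColor_eq hp hE]
      exact (c.towardsColor_ne_vertexColor hp).symm
    · obtain ⟨u, p, hup, he, hE⟩ := centralGraph_edge_eq_towards_of_inr_mem E hE
      simp only [toTotalColoring, Sum.elim_inl, Sum.elim_inr, c.edgeColor_eq hup.ne' hE]
      exact (c.subdivColor_ne he).2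

lemma apply_eq_self (φ : centralGraph G ≃g centralGraph G)
    (hφ : PreservesTotalColoring (centralGraph G) c.toTotalColoring φ)
    (hinl : ∀ v e, φ (inl v) ≠ inr e) (x : V ⊕ G.edgeSet) : φ x = x := by
  refine centralGraph_iso_apply_eq_self φ (fun v => ?_) x
  rcases h : φ (inl v) with v' | e
  · have := hφ.1 (inl v)
    rw [h] at this
    rw [c.vertexColor_injective this]
  · exact absurd h (hinl v e)

end CentralColoring

lemma Sym2.exists_forall_eq_mk_ne {α β : Type*} [Fintype β] (hβ : 4 < Fintype.card β)
    (f : α → β) (g : α → α → β) (z : Sym2 α) :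
    ∃ c, ∀ u q, z = s(u, q) → c ≠ f u ∧ c ≠ g u q := by
  classical
  induction z using Sym2.ind with | _ a b => ?_
  obtain ⟨c, -, hc⟩ := Finset.exists_mem_notMem_of_card_lt_card
    (s := {f a, g a b, f b, g b a}) (t := Finset.univ)
    (Finset.card_le_four.trans_lt (by rwa [Finset.card_univ]))
  simp only [Finset.mem_insert, Finset.mem_singleton, not_or] at hc
  refine ⟨c, fun u q h => ?_⟩
  rcases Sym2.eq_iff.1 h with ⟨rfl, rfl⟩ | ⟨rfl, rfl⟩
  exacts [⟨hc.1, hc.2.1⟩, ⟨hc.2.2.1, hc.2.2.2⟩]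

lemma SimpleGraph.Connected.eq_of_not_adj_of_card_le_three {V : Type*} [Finite V]
    {G : SimpleGraph V} (hG : G.Connected) (hV : Nat.card V ≤ 3) {u v w : V} (hv : v ≠ u)
    (hw : w ≠ u) (huv : ¬ G.Adj u v) (huw : ¬ G.Adj u w) : v = w := by
  by_contra hvw
  have : Nontrivial V := ⟨⟨u, v, hv.symm⟩⟩
  obtain ⟨x, hx⟩ := hG.preconnected.exists_adj_of_nontrivial u
  have hxv : v ≠ x := fun h => huv (h ▸ hx)
  have hxw : w ≠ x := fun h => huw (h ▸ hx)
  have h4 : ({u, v, w, x} : Set V).ncard = 4 := by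
    rw [Set.ncard_insert_of_notMem, Set.ncard_insert_of_notMem, Set.ncard_pair hxw]
    · simp [hvw, hxv]
    · simp [hv.symm, hw.symm, hx.ne]
  have := Set.ncard_le_card ({u, v, w, x} : Set V)
  omega

lemma exists_centralColoring_of_card_le_three {V : Type*} [Finite V] {G : SimpleGraph V}
    (hG : G.Connected) (hV : Nat.card V ≤ 3) :
    ∃ c : CentralColoring G (Nat.card V + 1), ∀ v e, c.subdivColor e ≠ c.vertexColor v := by
  classical
  let ι := Finite.equivFin V
  have hlast : ∀ a, Fin.last _ ≠ (ι a).castSucc := fun a => (Fin.castSucc_ne_last _).symm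
  refine ⟨{
    vertexColor := fun v => (ι v).castSucc
    subdivColor := fun _ => Fin.last _
    towardsColor := fun u v => if G.Adj u v then (ι v).castSucc else Fin.last _
    vertexColor_injective := fun _ _ h => by simpa using h
    towardsColor_injOn := fun u v hv w hw h => by
      by_cases hv' : G.Adj u v <;> by_cases hw' : G.Adj u w <;>
        simp [hv', hw', hlast, (hlast _).symm] at h
      exacts [h, hG.eq_of_not_adj_of_card_le_three hV hv hw hv' hw']
    towardsColor_ne_vertexColor := fun {u p} hp => by
      by_cases h : G.Adj u p <;> simp [h, hp, hlast]
    towardsColor_ne_of_adj := fun h => by simpa [h, h.symm] using h.ne'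
    towardsColor_comm_of_not_adj := fun {u v} h => by
      simp [h, show ¬ G.Adj v u from fun h' => h h'.symm]
    subdivColor_ne := fun {e u q} he => by
      have hadj : G.Adj u q := by simpa [he] using e.2
      simp [hadj, hlast] }, fun v e => hlast v⟩

lemma Fin.castSucc_add_succ_comm {n : ℕ} (a b : Fin n) :
    a.castSucc + b.succ = b.castSucc + a.succ := by
  rw [← Fin.coeSucc_eq_succ, ← Fin.coeSucc_eq_succ]
  abel

section LowerSucc

variable {V : Type*} [Finite V] (G : SimpleGraph V) {n : ℕ} (ι : V ≃ Fin n)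

def lowerNbhd (u : V) : Set V := {w | G.Adj u w ∧ ι w < ι u}

lemma exists_lowerSucc {u v : V} (h : ι v < ι u) :
    ∃ w ∈ {w ∈ insert u (lowerNbhd G ι u) | ι v < ι w},
      ∀ w' ∈ {w ∈ insert u (lowerNbhd G ι u) | ι v < ι w}, ι w ≤ ι w' :=
  Set.exists_min_image _ ι (Set.toFinite _) ⟨u, Set.mem_insert _ _, h⟩

/-- For `v ∈ lowerNbhd G ι u`, the successor of `v` in `insert u (lowerNbhd G ι u)` ordered
by `ι`; otherwise `v`. -/
noncomputable def lowerSucc (u v : V) : V :=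
  open Classical in
  if h : v ∈ lowerNbhd G ι u then (exists_lowerSucc G ι h.2).choose else v

variable {G ι}

lemma lowerSucc_of_notMem {u v : V} (h : v ∉ lowerNbhd G ι u) : lowerSucc G ι u v = v :=
  dif_neg h

lemma lowerSucc_spec {u v : V} (h : v ∈ lowerNbhd G ι u) :
    lowerSucc G ι u v ∈ insert u (lowerNbhd G ι u) ∧ ι v < ι (lowerSucc G ι u v) ∧
      ∀ w ∈ insert u (lowerNbhd G ι u), ι v < ι w → ι (lowerSucc G ι u v) ≤ ι w := by
  rw [lowerSucc, dif_pos h]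
  obtain ⟨⟨hmem, hlt⟩, hmin⟩ := (exists_lowerSucc G ι h.2).choose_spec
  exact ⟨hmem, hlt, fun w hw hvw => hmin w ⟨hw, hvw⟩⟩

lemma lowerSucc_injOn (u : V) : Set.InjOn (lowerSucc G ι u) {u}ᶜ := by
  have hlt : ∀ {v w}, v ∈ lowerNbhd G ι u → w ∈ lowerNbhd G ι u → ι v < ι w →
      lowerSucc G ι u v ≠ lowerSucc G ι u w := fun {v w} hv hw hvw h =>
    ((lowerSucc_spec hv).2.2 w (Or.inr hw) hvw).not_gt (h ▸ (lowerSucc_spec hw).2.1)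
  have hmix : ∀ {v w}, v ∈ lowerNbhd G ι u → w ∉ lowerNbhd G ι u → w ≠ u →
      lowerSucc G ι u v ≠ w := fun {v w} hv hw hwu h =>
    (lowerSucc_spec hv).1.elim (fun h' => hwu (h.symm.trans h')) (fun h' => hw (h ▸ h'))
  intro v hv w hw h
  by_cases hv' : v ∈ lowerNbhd G ι u <;> by_cases hw' : w ∈ lowerNbhd G ι u
  · rcases lt_trichotomy (ι v) (ι w) with hvw | hvw | hvw
    · exact absurd h (hlt hv' hw' hvw)
    · exact ι.injective hvw
    · exact absurd h.symm (hlt hw' hv' hvw)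
  · rw [lowerSucc_of_notMem hw'] at h
    exact absurd h (hmix hv' hw' hw)
  · rw [lowerSucc_of_notMem hv'] at h
    exact absurd h.symm (hmix hw' hv' hv)
  · rwa [lowerSucc_of_notMem hv', lowerSucc_of_notMem hw'] at h

variable (G ι)

noncomputable def lowerSuccColor (u v : V) : Fin (n + 1) :=
  (ι u).castSucc + (ι (lowerSucc G ι u v)).succ

variable {G ι}

lemma lowerSuccColor_injOn (u : V) : Set.InjOn (lowerSuccColor G ι u) {u}ᶜ :=
  fun _ hv _ hw h =>
    lowerSucc_injOn u hv hw (ι.injective (Fin.succ_injective _ (add_left_cancel h)))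

lemma lowerSuccColor_ne_castSucc (u v : V) : lowerSuccColor G ι u v ≠ (ι u).castSucc :=
  fun h => Fin.succ_ne_zero _ (add_eq_left.1 h)

lemma lowerSuccColor_comm_of_not_adj {u v : V} (h : ¬ G.Adj u v) :
    lowerSuccColor G ι u v = lowerSuccColor G ι v u := by
  rw [lowerSuccColor, lowerSuccColor, lowerSucc_of_notMem fun h' => h h'.1,
    lowerSucc_of_notMem fun h' => h h'.1.symm, Fin.castSucc_add_succ_comm]

lemma lowerSuccColor_ne_of_adj {u v : V} (h : G.Adj u v) :
    lowerSuccColor G ι u v ≠ lowerSuccColor G ι v u := by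
  -- only the endpoint coming later in `ι` shifts its colour
  have key : ∀ {u v}, G.Adj u v → ι v < ι u →
      lowerSuccColor G ι u v ≠ lowerSuccColor G ι v u := by
    intro u v h hvu hc
    have hv : v ∈ lowerNbhd G ι u := ⟨h, hvu⟩
    rw [lowerSuccColor, lowerSuccColor, lowerSucc_of_notMem fun h' => hvu.not_gt h'.2,
      Fin.castSucc_add_succ_comm (ι v)] at hc
    exact (lowerSucc_spec hv).2.1.ne' (Fin.succ_injective _ (add_left_cancel hc))
  rcases lt_trichotomy (ι u) (ι v) with huv | huv | huv
  · exact (key h.symm huv).symm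
  · exact absurd (ι.injective huv) h.ne
  · exact key h huv

end LowerSucc

lemma exists_centralColoring_of_four_le_card {V : Type*} [Finite V] (G : SimpleGraph V)
    (hV : 4 ≤ Nat.card V) : Nonempty (CentralColoring G (Nat.card V + 1)) := by
  let ι := Finite.equivFin V
  let vc : V → Fin (Nat.card V + 1) := fun v => (ι v).castSucc
  choose wc hwc using fun e : G.edgeSet =>
    Sym2.exists_forall_eq_mk_ne (by simpa using hV) vc (lowerSuccColor G ι) e.1
  exact ⟨{
    vertexColor := vc
    subdivColor := wc
    towardsColor := lowerSuccColor G ι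
    vertexColor_injective := fun _ _ h => ι.injective (Fin.castSucc_injective _ h)
    towardsColor_injOn := lowerSuccColor_injOn
    towardsColor_ne_vertexColor := fun _ => lowerSuccColor_ne_castSucc _ _
    towardsColor_ne_of_adj := lowerSuccColor_ne_of_adj
    towardsColor_comm_of_not_adj := lowerSuccColor_comm_of_not_adj
    subdivColor_ne := fun he => hwc _ _ _ he }⟩

lemma exists_distinguishing_totalColoring_centralGraph {V : Type*} [Finite V]
    {G : SimpleGraph V} (hG : G.Connected) :
    ∃ f : (V ⊕ G.edgeSet) ⊕ (centralGraph G).edgeSet → Fin (Nat.card V + 1),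
      IsProperTotalColoring (centralGraph G) f ∧
      ∀ φ : centralGraph G ≃g centralGraph G,
        PreservesTotalColoring (centralGraph G) f φ → ∀ x, φ x = x := by
  rcases le_or_gt (Nat.card V) 3 with hV | hV
  · obtain ⟨c, hc⟩ := exists_centralColoring_of_card_le_three hG hV
    refine ⟨c.toTotalColoring, c.isProperTotalColoring, fun φ hφ => c.apply_eq_self φ hφ ?_⟩
    intro v e he
    have := hφ.1 (inl v)
    rw [he] at this
    exact hc v e this
  · obtain ⟨c⟩ := exists_centralColoring_of_four_le_card G hV
    exact ⟨c.toTotalColoring, c.isProperTotalColoring, fun φ hφ =>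
      c.apply_eq_self φ hφ (centralGraph_iso_apply_inl_ne_inr hV φ)⟩

/-- For a connected graph `G`,
`Δ(C(G)) + 1 ≤ χ''(C(G)) ≤ χ''_D(C(G)) ≤ Δ(C(G)) + 2`; in particular
`χ''_D(C(G))` equals `Δ(C(G)) + 1` or `Δ(C(G)) + 2`. -/
theorem stmt_11 {V : Type*} [Fintype V] (G : SimpleGraph V)
    (hconn : G.Connected) :
    (maxDeg (centralGraph G) + 1 ≤ totalChromaticNumber (centralGraph G) ∧
     totalChromaticNumber (centralGraph G) ≤
       totalDistinguishingChromaticNumber (centralGraph G) ∧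
     totalDistinguishingChromaticNumber (centralGraph G) ≤
       maxDeg (centralGraph G) + 2) ∧
    (totalDistinguishingChromaticNumber (centralGraph G) = maxDeg (centralGraph G) + 1 ∨
     totalDistinguishingChromaticNumber (centralGraph G) = maxDeg (centralGraph G) + 2) := by
  have : Nonempty V := hconn.nonempty
  obtain ⟨f, hf, hdist⟩ := exists_distinguishing_totalColoring_centralGraph hconn
  have hlower := maxDeg_add_one_le_totalChromaticNumber ⟨_, f, hf⟩
  have hmid := totalChromaticNumber_le_totalDistinguishingChromaticNumber ⟨_, f, hf, hdist⟩
  have hupper : totalDistinguishingChromaticNumber (centralGraph G) ≤ Nat.card V + 1 :=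
    Nat.sInf_le ⟨f, hf, hdist⟩
  have hΔ := centralGraph_ncard_neighborSet_inl (G := G) (Classical.arbitrary V) ▸
    ncard_neighborSet_le_maxDeg (centralGraph G) (inl (Classical.arbitrary V))
  have hV : 0 < Nat.card V := Nat.card_pos
  exact ⟨⟨hlower, hmid, by omega⟩, by omega⟩
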